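/- arXiv:2106.13550 — 8 statements merged into one kernel-verified Lean document; each statement's English description precedes it below -/
import Mathlib

section
/- For all n ≥ 0 and k ≥ 2, the number of binary words of length n that do not contain k consecutive 1s equals f_{n+k,k}, where f is the k-step Fibonacci sequence defined by f_{n,k} = 0 for 0 ≤ n ≤ k−2, f_{k−1,k} = 1, and f_{n,k} = Σ_{i=1}^{k} f_{n−i,k} for n ≥ k. -/
/-- A binary word (list of Booleans) avoids `k` consecutive 1s if it has
no contiguous factor equal to `1^k`. -/
def AvoidsOnes (k : ℕ) (w : List Bool) : Prop :=
  ¬ (List.replicate k true <:+: w)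

instance (k : ℕ) (w : List Bool) : Decidable (AvoidsOnes k w) :=
  inferInstanceAs (Decidable ¬ _)

/-- The number of binary words of length `n` avoiding `k` consecutive 1s. -/
def numAvoiding (n k : ℕ) : ℕ :=
  (Finset.univ.filter (fun w : Fin n → Bool => AvoidsOnes k (List.ofFn w))).card

/-!
Cutting a word of length `n ≥ k` after its first `0` writes it uniquely as `1^(i-1) 0 v` with
`1 ≤ i ≤ k`, and the word avoids `1^k` iff `v` does; so the counts satisfy the `k`-step
recurrence. Words shorter than `k` all avoid `1^k`, so the first `k` counts are `2^n`; the same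
holds for `f (n + k)`, because `f (m + 1) + f (m - k) = 2 f m` and `f` vanishes below `k - 1`.
Two solutions of a linear recurrence with the same first `k` terms coincide.
-/

open Finset

namespace List

theorem infix_append_cons_iff_of_notMem {α : Type*} {x u v : List α} {a : α} (ha : a ∉ x) :
    x <:+: u ++ a :: v ↔ x <:+: u ∨ x <:+: v := by
  refine ⟨fun h => ?_, ?_⟩
  · rcases infix_append_iff.1 h with hu | hv | ⟨l₁, l₂, rfl, h₁, h₂⟩
    · exact .inl hu
    · rcases infix_cons_iff.1 hv with hp | hv
      · rcases prefix_cons_iff.1 hp with rfl | ⟨t, rfl, -⟩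
        · exact .inr nil_infix
        · exact absurd mem_cons_self ha
      · exact .inr hv
    · rcases prefix_cons_iff.1 h₂ with rfl | ⟨t, rfl, -⟩
      · exact .inl (by simpa using h₁.isInfix)
      · exact absurd (mem_append_right _ mem_cons_self) ha
  · rintro (hu | hv)
    · exact infix_append_of_infix_left hu
    · exact infix_append_of_infix_right (hv.trans (infix_cons (infix_refl v)))

theorem eq_replicate_or_eq_replicate_true_append_false_cons :
    ∀ w : List Bool, w = replicate w.length true ∨ ∃ j v, w = replicate j true ++ false :: v
  | [] => .inl rfl
  | false :: v => .inr ⟨0, v, rfl⟩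
  | true :: w => by
    rcases eq_replicate_or_eq_replicate_true_append_false_cons w with h | ⟨j, v, h⟩
    · exact .inl (by rw [length_cons, replicate_succ, ← h])
    · exact .inr ⟨j + 1, v, by rw [h, replicate_succ, cons_append]⟩

theorem idxOf_false_replicate_true_append_false_cons (j : ℕ) (v : List Bool) :
    (replicate j true ++ false :: v).idxOf false = j := by
  simp [idxOf_append_of_notMem]

end List

theorem LinearRecurrence.IsSolution.comp_add {R : Type*} [CommSemiring R]
    {E : LinearRecurrence R} {u : ℕ → R} (hu : E.IsSolution u) (m : ℕ) :
    E.IsSolution fun n => u (n + m) := fun n => by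
  simpa only [add_right_comm] using hu (n + m)

theorem avoidsOnes_replicate {k m : ℕ} : AvoidsOnes k (List.replicate m true) ↔ m < k := by
  simp [AvoidsOnes, List.infix_replicate_iff]

theorem avoidsOnes_replicate_true_append_false_cons {k j : ℕ} {v : List Bool} :
    AvoidsOnes k (List.replicate j true ++ false :: v) ↔ j < k ∧ AvoidsOnes k v := by
  rw [AvoidsOnes, List.infix_append_cons_iff_of_notMem (by simp), not_or,
    ← AvoidsOnes, avoidsOnes_replicate]
  rfl

def wordsOfLength (n : ℕ) : Finset (List Bool) :=
  univ.image (List.ofFn : (Fin n → Bool) → List Bool)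

theorem mem_wordsOfLength {n : ℕ} {w : List Bool} : w ∈ wordsOfLength n ↔ w.length = n := by
  refine ⟨?_, fun h => mem_image.2 ⟨h ▸ w.get, mem_univ _, ?_⟩⟩
  · intro h
    obtain ⟨g, -, rfl⟩ := mem_image.1 h
    exact List.length_ofFn
  · subst h
    exact List.ofFn_get w

theorem numAvoiding_eq_card_filter_wordsOfLength (n k : ℕ) :
    numAvoiding n k = ((wordsOfLength n).filter (AvoidsOnes k)).card := by
  rw [wordsOfLength, filter_image, card_image_of_injective _ List.ofFn_injective, numAvoiding]

theorem numAvoiding_of_lt {n k : ℕ} (h : n < k) : numAvoiding n k = 2 ^ n := by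
  have avoids (w : Fin n → Bool) : AvoidsOnes k (List.ofFn w) := fun hw =>
    absurd hw.length_le (by simpa using h)
  simp [numAvoiding, avoids]

theorem filter_avoidsOnes_wordsOfLength_eq_biUnion {n k : ℕ} (h : k ≤ n) :
    (wordsOfLength n).filter (AvoidsOnes k) = (Icc 1 k).biUnion fun i =>
      ((wordsOfLength (n - i)).filter (AvoidsOnes k)).image
        (List.replicate (i - 1) true ++ false :: ·) := by
  ext w
  simp only [mem_filter, mem_biUnion, mem_image, mem_Icc, mem_wordsOfLength]
  constructor
  · rintro ⟨rfl, hw⟩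
    rcases w.eq_replicate_or_eq_replicate_true_append_false_cons with hrep | ⟨j, v, rfl⟩
    · rw [hrep, avoidsOnes_replicate] at hw
      omega
    · rw [avoidsOnes_replicate_true_append_false_cons] at hw
      exact ⟨j + 1, by omega, v, ⟨by simp; omega, hw.2⟩, rfl⟩
  · rintro ⟨i, hi, v, ⟨hv, hav⟩, rfl⟩
    exact ⟨by simp; omega, avoidsOnes_replicate_true_append_false_cons.2 ⟨by omega, hav⟩⟩

theorem numAvoiding_eq_sum {n k : ℕ} (h : k ≤ n) :
    numAvoiding n k = ∑ i ∈ Icc 1 k, numAvoiding (n - i) k := by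
  simp only [numAvoiding_eq_card_filter_wordsOfLength]
  rw [filter_avoidsOnes_wordsOfLength_eq_biUnion h, card_biUnion]
  · exact sum_congr rfl fun i _ => card_image_of_injective _ fun v v' h => by simpa using h
  · intro i hi i' hi' hne
    refine disjoint_left.2 fun w hw hw' => hne ?_
    obtain ⟨v, -, rfl⟩ := mem_image.1 hw
    obtain ⟨v', -, h⟩ := mem_image.1 hw'
    have := congrArg (List.idxOf false) h
    simp only [List.idxOf_false_replicate_true_append_false_cons] at this
    simp only [coe_Icc, Set.mem_Icc] at hi hi'
    omega

def kStepRecurrence (k : ℕ) : LinearRecurrence ℕ := ⟨k, fun _ => 1⟩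

namespace kStepRecurrence

variable {k : ℕ} {u : ℕ → ℕ}

theorem isSolution_iff_range :
    (kStepRecurrence k).IsSolution u ↔ ∀ n, u (n + k) = ∑ i ∈ range k, u (n + i) := by
  simp only [LinearRecurrence.IsSolution, kStepRecurrence, one_mul]
  exact forall_congr' fun n => by rw [← Fin.sum_univ_eq_sum_range]; rfl

theorem isSolution_iff :
    (kStepRecurrence k).IsSolution u ↔ ∀ n, k ≤ n → u n = ∑ i ∈ Icc 1 k, u (n - i) := by
  have reflect (n : ℕ) : ∑ i ∈ Icc 1 k, u (n + k - i) = ∑ i ∈ range k, u (n + i) :=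
    sum_nbij' (k - ·) (k - ·) (by simp; omega) (by simp; omega) (by simp; omega) (by simp; omega)
      (by simp; intro i _ _; congr 1; omega)
  rw [isSolution_iff_range]
  refine ⟨fun hu n hn => ?_, fun hu n => ?_⟩
  · obtain ⟨m, rfl⟩ := Nat.exists_eq_add_of_le' hn
    rw [hu, reflect]
  · rw [hu _ (Nat.le_add_left k n), reflect]

theorem apply_succ_add_add_apply
    (hu : (kStepRecurrence k).IsSolution u) (n : ℕ) : u (n + 1 + k) + u n = 2 * u (n + k) := by
  rw [isSolution_iff_range] at hu
  cases k with
  | zero =>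
    simp only [add_zero, range_zero, sum_empty] at hu
    simp [hu]
  | succ j =>
    have hsucc : u (n + 1 + (j + 1)) = ∑ i ∈ range j, u (n + 1 + i) + u (n + (j + 1)) := by
      rw [hu, sum_range_succ, add_right_comm n 1 j, add_assoc]
    have hzero : u (n + (j + 1)) = ∑ i ∈ range j, u (n + 1 + i) + u n := by
      rw [hu, sum_range_succ', add_zero]
      simp only [add_right_comm, add_assoc]
    omega

theorem apply_add_eq_two_pow
    (hu : (kStepRecurrence k).IsSolution u) (hk : 1 ≤ k) (h0 : ∀ n, n + 2 ≤ k → u n = 0)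
    (h1 : u (k - 1) = 1) : ∀ n < k, u (n + k) = 2 ^ n
  | 0, _ => by
    rw [isSolution_iff_range.1 hu, sum_eq_single (k - 1)]
    · simpa using h1
    · intro i hi hne
      rw [mem_range] at hi
      exact h0 _ (by omega)
    · simp only [mem_range]
      omega
  | n + 1, hn => by
    have hdouble := apply_succ_add_add_apply hu n
    rw [h0 n (by omega), apply_add_eq_two_pow hu hk h0 h1 n (by omega)]
      at hdouble
    rw [pow_succ]
    omega

end kStepRecurrence

theorem words_avoiding_counted_by_kstep_fibonacci
    (k : ℕ) (hk : 2 ≤ k) (f : ℕ → ℕ)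
    (h0 : ∀ n ≤ k - 2, f n = 0)
    (h1 : f (k - 1) = 1)
    (hrec : ∀ n, k ≤ n → f n = ∑ i ∈ Finset.Icc 1 k, f (n - i)) :
    ∀ n, numAvoiding n k = f (n + k) := by
  have hf : (kStepRecurrence k).IsSolution f := kStepRecurrence.isSolution_iff.2 hrec
  have hnum : (kStepRecurrence k).IsSolution (numAvoiding · k) :=
    kStepRecurrence.isSolution_iff.2 fun _ => numAvoiding_eq_sum
  have hinit : Set.EqOn (numAvoiding · k) (fun n => f (n + k)) (range k) := fun n hn => by
    rw [coe_range, Set.mem_Iio] at hn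
    dsimp only
    rw [numAvoiding_of_lt hn, kStepRecurrence.apply_add_eq_two_pow hf (by omega)
      (fun m hm => h0 m (by omega)) h1 n hn]
  exact congrFun (((kStepRecurrence k).eq_iff_eqOn_range_order _ _ hnum (hf.comp_add k)).2 hinit)
end

section
/- For k ≥ 2, every root r ∈ ℂ of the Fibonacci polynomial x^k − x^{k−1} − ⋯ − x − 1 other than the positive real root φ_k satisfies |r| < 1. -/
/-!
Multiplying by `x - 1` turns `x ^ k = ∑_{i<k} x ^ i` into `x ^ k * (2 - x) = 1`. For a root `r`
with `t = ‖r‖ ≥ 1`, the triangle inequality gives `t ^ k ≤ ∑_{i<k} t ^ i`, which by the same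
identity for `t` means `t ^ k * (2 - t) ≥ 1 = t ^ k * ‖2 - r‖`. Hence `‖2 - r‖ ≤ 2 - ‖r‖`, which
forces `r = t`: `r` is a positive real root. Positive roots are unique, because if `0 < a < b`
and `a` is a root, then summing `a ^ k * b ^ i < a ^ i * b ^ k` over `i < k` gives
`∑_{i<k} b ^ i < b ^ k`.
-/

open Polynomial Finset

theorem eval_X_pow_sub_geom_sum_eq_zero_iff {R : Type*} [CommRing R] (k : ℕ) (x : R) :
    ((X : R[X]) ^ k - ∑ i ∈ range k, X ^ i).eval x = 0 ↔ x ^ k = ∑ i ∈ range k, x ^ i := by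
  simp only [eval_sub, eval_pow, eval_X, eval_finsetSum, sub_eq_zero]

theorem sub_one_mul_pow_sub_geom_sum {R : Type*} [CommRing R] (k : ℕ) (x : R) :
    (x - 1) * (x ^ k - ∑ i ∈ range k, x ^ i) = x ^ k * (x - 2) + 1 := by
  linear_combination -geom_sum_mul x k

theorem geom_sum_lt_pow_of_pow_eq_geom_sum {k : ℕ} {a b : ℝ} (ha : 0 < a) (hab : a < b)
    (hA : a ^ k = ∑ i ∈ range k, a ^ i) :
    ∑ i ∈ range k, b ^ i < b ^ k := by
  have hk : (range k).Nonempty := by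
    rw [nonempty_range_iff]
    rintro rfl
    simp at hA
  have term_lt : ∀ i ∈ range k, a ^ k * b ^ i < a ^ i * b ^ k := by
    intro i hi
    have hik : i ≤ k := (mem_range.1 hi).le
    calc a ^ k * b ^ i = a ^ i * b ^ i * a ^ (k - i) := by rw [← pow_mul_pow_sub a hik]; ring
      _ < a ^ i * b ^ i * b ^ (k - i) := by
        have hki : k - i ≠ 0 := Nat.sub_ne_zero_of_lt (mem_range.1 hi)
        have hb : 0 < b := ha.trans hab
        gcongr
      _ = a ^ i * b ^ k := by rw [← pow_mul_pow_sub b hik]; ring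
  have := sum_lt_sum_of_nonempty hk term_lt
  rw [← mul_sum, ← sum_mul, ← hA] at this
  exact lt_of_mul_lt_mul_left this (by positivity)

theorem eq_of_pow_eq_geom_sum {k : ℕ} {a b : ℝ} (ha : 0 < a) (hb : 0 < b)
    (hA : a ^ k = ∑ i ∈ range k, a ^ i) (hB : b ^ k = ∑ i ∈ range k, b ^ i) : a = b := by
  rcases lt_trichotomy a b with hab | hab | hab
  · exact absurd hB (geom_sum_lt_pow_of_pow_eq_geom_sum ha hab hA).ne'
  · exact hab
  · exact absurd hA (geom_sum_lt_pow_of_pow_eq_geom_sum hb hab hB).ne'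

theorem Complex.eq_norm_of_norm_sub_le {c : ℝ} (hc : 0 < c) {z : ℂ} (h : ‖c - z‖ ≤ c - ‖z‖) :
    z = ‖z‖ := by
  have hnorm_c : ‖(c : ℂ)‖ = c := by simp [hc.le]
  have heq : ‖c - z‖ = |‖(c : ℂ)‖ - ‖z‖| := by
    have := norm_sub_norm_le (c : ℂ) z
    rw [hnorm_c] at this ⊢
    rw [abs_of_nonneg ((norm_nonneg _).trans h)]
    exact le_antisymm h this
  have := sameRay_iff_norm_smul_eq.1 (sameRay_iff_norm_sub.2 heq)
  rw [hnorm_c, Complex.real_smul, Complex.real_smul, mul_comm] at this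
  exact mul_right_cancel₀ (by exact_mod_cast hc.ne') this

theorem Complex.eq_norm_of_pow_eq_geom_sum {k : ℕ} {z : ℂ} (hz : z ^ k = ∑ i ∈ range k, z ^ i)
    (h1 : 1 ≤ ‖z‖) : z = ‖z‖ := by
  set t := ‖z‖ with ht_def
  have ht : 0 < t ^ k := by positivity
  have hzk : z ^ k * (2 - z) = 1 := by
    linear_combination sub_one_mul_pow_sub_geom_sum k z + (1 - z) * hz
  have hnorm : t ^ k * ‖2 - z‖ = 1 := by
    simpa only [norm_mul, norm_pow, norm_one] using congrArg norm hzk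
  have ht_le : t ^ k ≤ ∑ i ∈ range k, t ^ i := by
    calc t ^ k = ‖∑ i ∈ range k, z ^ i‖ := by rw [← hz, norm_pow]
      _ ≤ ∑ i ∈ range k, t ^ i := by
        simpa only [norm_pow, ht_def] using norm_sum_le (range k) (z ^ ·)
  have hge : 1 ≤ t ^ k * (2 - t) := by
    nlinarith [sub_one_mul_pow_sub_geom_sum k t,
      mul_nonpos_of_nonneg_of_nonpos (sub_nonneg.2 h1) (sub_nonpos.2 ht_le)]
  refine Complex.eq_norm_of_norm_sub_le two_pos ?_
  rw [← hnorm] at hge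
  exact_mod_cast le_of_mul_le_mul_left hge ht

theorem other_roots_lt_one_general (k : ℕ) (φ : ℝ) (hφ : 0 < φ)
    (hroot : ((X : ℝ[X]) ^ k - ∑ i ∈ Finset.range k, X ^ i).eval φ = 0)
    (r : ℂ) (hr : ((X : ℂ[X]) ^ k - ∑ i ∈ Finset.range k, X ^ i).eval r = 0)
    (hne : r ≠ (φ : ℂ)) :
    ‖r‖ < 1 := by
  rw [eval_X_pow_sub_geom_sum_eq_zero_iff] at hroot hr
  by_contra! h1
  have hr_real : r = ‖r‖ := Complex.eq_norm_of_pow_eq_geom_sum hr h1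
  have hnorm_root : ‖r‖ ^ k = ∑ i ∈ range k, ‖r‖ ^ i := by
    rw [hr_real] at hr
    exact_mod_cast hr
  have hnorm_eq : ‖r‖ = φ := eq_of_pow_eq_geom_sum (zero_lt_one.trans_le h1) hφ hnorm_root hroot
  exact hne (hnorm_eq ▸ hr_real)

theorem other_roots_lt_one (k : ℕ) (hk : 2 ≤ k) (φ : ℝ) (hφ : 0 < φ)
    (hroot : ((X : ℝ[X]) ^ k - ∑ i ∈ Finset.range k, X ^ i).eval φ = 0)
    (r : ℂ) (hr : ((X : ℂ[X]) ^ k - ∑ i ∈ Finset.range k, X ^ i).eval r = 0)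
    (hne : r ≠ (φ : ℂ)) :
    ‖r‖ < 1 :=
  other_roots_lt_one_general k φ hφ hroot r hr hne
end

section
/- For k ≥ 2, every root r of the Fibonacci polynomial x^k − x^{k−1} − ⋯ − x − 1 satisfies |r| > 3^{−1/k}. -/
/-!
Multiplying by `1 - r` turns `p_k(r) = 0` into `r ^ k * (2 - r) = 1`. If `‖r‖ ^ k ≤ 1 / 3`, then
`‖r‖ < 1`, so `‖r ^ k * (2 - r)‖ ≤ (2 + ‖r‖) / 3 < 1`, which is absurd.
-/

open Polynomial

theorem pow_sub_geom_sum_mul_one_sub {R : Type*} [CommRing R] (r : R) (k : ℕ) :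
    (r ^ k - ∑ i ∈ Finset.range k, r ^ i) * (1 - r) = r ^ k * (2 - r) - 1 := by
  linear_combination geom_sum_mul r k

theorem one_third_lt_norm_pow_of_pow_mul_two_sub_eq_one {R : Type*} [SeminormedRing R]
    [NormOneClass R] {r : R} {k : ℕ} (hk : k ≠ 0) (h : r ^ k * (2 - r) = 1) :
    1 / 3 < ‖r‖ ^ k := by
  by_contra! hsmall
  have hr : ‖r‖ < 1 :=
    (pow_lt_one_iff_of_nonneg (norm_nonneg r) hk).mp (by linarith)
  have htwo : ‖(2 : R)‖ ≤ 2 := by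
    simpa [one_add_one_eq_two] using norm_add_le (1 : R) 1
  have hsub : ‖2 - r‖ ≤ 2 + ‖r‖ := (norm_sub_le _ _).trans (by linarith)
  have hone := calc
    (1 : ℝ) = ‖r ^ k * (2 - r)‖ := by rw [h, norm_one]
    _ ≤ ‖r‖ ^ k * ‖2 - r‖ := (norm_mul_le _ _).trans
        (mul_le_mul_of_nonneg_right (norm_pow_le _ _) (norm_nonneg _))
    _ ≤ 1 / 3 * (2 + ‖r‖) := mul_le_mul hsmall hsub (norm_nonneg _) (by norm_num)
  linarith

theorem roots_gt_third_root_general (k : ℕ) (r : ℂ)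
    (hr : ((X : ℂ[X]) ^ k - ∑ i ∈ Finset.range k, X ^ i).eval r = 0) :
    (3 : ℝ) ^ (-(1 : ℝ) / k) < ‖r‖ := by
  have hk : k ≠ 0 := by
    rintro rfl
    simp at hr
  simp only [eval_sub, eval_pow, eval_X, eval_finsetSum] at hr
  have hroot : r ^ k * (2 - r) = 1 := by
    linear_combination (1 - r) * hr - pow_sub_geom_sum_mul_one_sub r k
  have hpow := one_third_lt_norm_pow_of_pow_mul_two_sub_eq_one hk hroot
  have hk' : (0 : ℝ) < k := by positivity
  rw [neg_div, Real.rpow_neg (by norm_num), ← Real.inv_rpow (by norm_num), one_div,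
    Real.rpow_inv_lt_iff_of_pos (by norm_num) (norm_nonneg r) hk', Real.rpow_natCast]
  simpa using hpow

theorem roots_gt_third_root (k : ℕ) (hk : 2 ≤ k) (r : ℂ)
    (hr : ((X : ℂ[X]) ^ k - ∑ i ∈ Finset.range k, X ^ i).eval r = 0) :
    (3 : ℝ) ^ (-(1 : ℝ) / k) < ‖r‖ :=
  roots_gt_third_root_general k r hr
end

section
/- For k ≥ 2, the polynomial x^k + x^{k−1} + ⋯ + x^2 + x − 1 is irreducible over ℚ. -/
/-!
A monic integer polynomial whose constant term is `±1` has roots whose product has absolute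
value `1`, so it has a root in the closed unit disk. Hence a monic polynomial in `ℤ[X]` with
constant term `±1` is irreducible as soon as it has at most one root in the closed unit disk,
counted with multiplicity: each factor of a nontrivial factorisation would contribute one.

For `g_k` this follows from `(x - 1) g_k(x) = x^(k+1) - 2x + 1`. A root `z ≠ 1` with `|z| ≤ 1`
satisfies `|z|^(k+1) = |2z - 1| ≥ 2|z| - 1`, which for `k ≥ 2` forces `|z| < 2/3`. Two distinct
such roots `z, w` would give `∑ z^i w^(k-i) = 2`, and a double root would give `(k+1) z^k = 2`;
both are impossible because `(k+1) (2/3)^k ≤ 4/3`. Gauss's lemma passes from `ℤ` to `ℚ`.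
-/

open Polynomial

lemma Multiset.exists_mem_norm_le_one_of_norm_prod_le_one {K : Type*} [NormedField K]
    {s : Multiset K} (hs : s ≠ 0) (hprod : ‖s.prod‖ ≤ 1) : ∃ z ∈ s, ‖z‖ ≤ 1 := by
  by_contra! h
  obtain ⟨z, hz⟩ := Multiset.exists_mem_of_ne_zero hs
  obtain ⟨t, rfl⟩ := Multiset.exists_cons_of_mem hz
  have ht : 1 ≤ ‖t.prod‖ := by
    rw [← normHom_apply, map_multiset_prod]
    refine Multiset.one_le_prod fun a ha ↦ ?_
    obtain ⟨b, hb, rfl⟩ := Multiset.mem_map.mp ha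
    exact (h b (Multiset.mem_cons_of_mem hb)).le
  rw [Multiset.prod_cons, norm_mul] at hprod
  nlinarith [h z hz]

lemma Polynomial.Monic.exists_mem_roots_norm_le_one {K : Type*} [NormedField K] [IsAlgClosed K]
    {p : K[X]} (hp : p.Monic) (hdeg : p.natDegree ≠ 0) (h0 : ‖p.coeff 0‖ ≤ 1) :
    ∃ z ∈ p.roots, ‖z‖ ≤ 1 := by
  have hsplit := IsAlgClosed.splits p
  refine Multiset.exists_mem_norm_le_one_of_norm_prod_le_one ?_ ?_
  · rwa [ne_eq, ← Multiset.card_eq_zero, ← hsplit.natDegree_eq_card_roots]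
  · simpa [hsplit.coeff_zero_eq_prod_roots_of_monic hp] using h0

lemma Polynomial.Monic.exists_mem_aroots_norm_le_one {p : ℤ[X]} (hp : p.Monic)
    (hdeg : p.natDegree ≠ 0) (h0 : IsUnit (p.coeff 0)) : ∃ z ∈ p.aroots ℂ, ‖z‖ ≤ 1 := by
  refine (hp.map (algebraMap ℤ ℂ)).exists_mem_roots_norm_le_one (by rwa [hp.natDegree_map]) ?_
  obtain ⟨u, hu⟩ := h0
  rcases Int.units_eq_one_or u with rfl | rfl <;> simp [coeff_map, ← hu]

lemma Polynomial.irreducible_of_card_filter_aroots_norm_le_one {f : ℤ[X]} (hf : f.Monic)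
    (hdeg : f.natDegree ≠ 0) (h0 : IsUnit (f.coeff 0))
    (hroots : ((f.aroots ℂ).filter (‖·‖ ≤ 1)).card ≤ 1) : Irreducible f := by
  refine hf.irreducible_iff_natDegree.mpr ⟨fun h ↦ hdeg (by simp [h]), fun p q hp hq hpq ↦ ?_⟩
  by_contra! hpq_deg
  have hunit : IsUnit (p.coeff 0 * q.coeff 0) := by rwa [← mul_coeff_zero, hpq]
  have card_pos : ∀ r : ℤ[X], r.Monic → r.natDegree ≠ 0 → IsUnit (r.coeff 0) →
      0 < ((r.aroots ℂ).filter (‖·‖ ≤ 1)).card := fun r hr hrdeg hr0 ↦ by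
    obtain ⟨z, hz, hz1⟩ := hr.exists_mem_aroots_norm_le_one hrdeg hr0
    exact Multiset.card_pos_iff_exists_mem.mpr ⟨z, Multiset.mem_filter.mpr ⟨hz, hz1⟩⟩
  rw [← hpq, aroots_mul (hpq ▸ hf.ne_zero), Multiset.filter_add, Multiset.card_add] at hroots
  have := card_pos p hp hpq_deg.1 (isUnit_of_mul_isUnit_left hunit)
  have := card_pos q hq hpq_deg.2 (isUnit_of_mul_isUnit_right hunit)
  omega

lemma add_one_mul_two_thirds_pow_le {k : ℕ} (hk : 1 ≤ k) : (k + 1) * (2 / 3 : ℝ) ^ k ≤ 4 / 3 := by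
  induction k, hk using Nat.le_induction with
  | base => norm_num
  | succ k hk ih =>
    have : (0 : ℝ) ≤ (2 / 3) ^ k := by positivity
    push_cast
    rw [pow_succ]
    nlinarith [(show (1 : ℝ) ≤ k by exact_mod_cast hk)]

lemma lt_two_thirds_of_two_mul_sub_one_le_pow {k : ℕ} (hk : 2 ≤ k) {r : ℝ} (hr0 : 0 ≤ r)
    (hr1 : r < 1) (h : 2 * r - 1 ≤ r ^ (k + 1)) : r < 2 / 3 := by
  have : r ^ (k + 1) ≤ r ^ 3 := pow_le_pow_of_le_one hr0 hr1.le (by omega)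
  by_contra! hr
  -- `r ^ 3 - 2 * r + 1 = (r - 1) * (r ^ 2 + r - 1)`
  nlinarith [mul_pos (sub_pos.mpr hr1) (show 0 < r ^ 2 + r - 1 by nlinarith)]

lemma Complex.one_lt_norm_two_mul_sub_one {z : ℂ} (hz : ‖z‖ = 1) (hz1 : z ≠ 1) :
    1 < ‖2 * z - 1‖ := by
  have h := parallelogram_law_with_norm ℝ z (z - 1)
  have : 0 < ‖z - 1‖ := norm_pos_iff.mpr (sub_ne_zero.mpr hz1)
  rw [show z + (z - 1) = 2 * z - 1 by ring, show z - (z - 1) = 1 by ring, norm_one, hz] at h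
  nlinarith [norm_nonneg (2 * z - 1)]

lemma norm_geom_sum₂_le {K : Type*} [NormedField K] {x y : K} {c : ℝ} (hx : ‖x‖ ≤ c)
    (hy : ‖y‖ ≤ c) (n : ℕ) :
    ‖∑ i ∈ Finset.range n, x ^ i * y ^ (n - 1 - i)‖ ≤ n * c ^ (n - 1) := by
  have hc : 0 ≤ c := (norm_nonneg x).trans hx
  calc _ ≤ ∑ i ∈ Finset.range n, ‖x ^ i * y ^ (n - 1 - i)‖ := norm_sum_le _ _
    _ ≤ ∑ _i ∈ Finset.range n, c ^ (n - 1) := Finset.sum_le_sum fun i hi ↦ by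
        rw [norm_mul, norm_pow, norm_pow]
        calc _ ≤ c ^ i * c ^ (n - 1 - i) := by gcongr
          _ = c ^ (n - 1) := by
            rw [← pow_add]
            have := Finset.mem_range.mp hi
            congr 1
            omega
    _ = n * c ^ (n - 1) := by simp

noncomputable def gk (R : Type*) [CommRing R] (k : ℕ) : R[X] := ∑ i ∈ Finset.Icc 1 k, X ^ i - 1

section CommRing

variable {R : Type*} [CommRing R] (k : ℕ)

lemma map_gk {S : Type*} [CommRing S] (f : R →+* S) : (gk R k).map f = gk S k := by
  simp [gk, Polynomial.map_sum]

lemma gk_succ : gk R (k + 1) = gk R k + X ^ (k + 1) := by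
  rw [gk, gk, Finset.sum_Icc_succ_top (by omega)]
  ring

lemma X_sub_one_mul_gk : (X - 1) * gk R k = X ^ (k + 1) - 2 * X + 1 := by
  induction k with
  | zero => rw [gk, Finset.Icc_eq_empty (by omega), Finset.sum_empty]; ring
  | succ k ih => rw [gk_succ]; linear_combination ih

lemma coeff_zero_gk : (gk R k).coeff 0 = -1 := by
  simp only [gk, coeff_zero_eq_eval_zero, eval_sub, eval_finsetSum, eval_pow, eval_X, eval_one]
  rw [Finset.sum_eq_zero fun i hi ↦ zero_pow (Nat.one_le_iff_ne_zero.mp (Finset.mem_Icc.mp hi).1),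
    zero_sub]

lemma eval_one_gk : (gk R k).eval 1 = k - 1 := by
  simp [gk, eval_finsetSum]

variable {k}

lemma monic_gk (hk : 1 ≤ k) : (gk R k).Monic := by
  refine (monic_X_sub_C (1 : R)).of_mul_monic_left ?_
  rw [C_1, X_sub_one_mul_gk]
  monicity!
  omega

lemma natDegree_gk [Nontrivial R] (hk : 1 ≤ k) : (gk R k).natDegree = k := by
  have hdeg := congrArg natDegree (X_sub_one_mul_gk (R := R) k)
  have hX_monic : (X - 1 : R[X]).Monic := by simpa using monic_X_sub_C (1 : R)
  have hX_deg : (X - 1 : R[X]).natDegree = 1 := by simpa using natDegree_X_sub_C (1 : R)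
  have h_deg : (X ^ (k + 1) - 2 * X + 1 : R[X]).natDegree = k + 1 := by
    compute_degree!
    simp [show k ≠ 0 by omega]
  rw [hX_monic.natDegree_mul (monic_gk hk), hX_deg, h_deg] at hdeg
  omega

lemma pow_succ_eq_of_isRoot_gk {z : R} (hz : (gk R k).IsRoot z) : z ^ (k + 1) = 2 * z - 1 := by
  have := congrArg (eval z) (X_sub_one_mul_gk (R := R) k)
  simp only [eval_mul, hz.eq_zero, eval_add, eval_sub, eval_pow, eval_X, eval_one, eval_ofNat,
    mul_zero] at this
  linear_combination -this

end CommRing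

section Complex

variable {k : ℕ}

lemma norm_lt_two_thirds_of_isRoot_gk (hk : 2 ≤ k) {z : ℂ} (hz : (gk ℂ k).IsRoot z)
    (hz1 : ‖z‖ ≤ 1) : ‖z‖ < 2 / 3 := by
  have hpow := pow_succ_eq_of_isRoot_gk hz
  have hne : z ≠ 1 := by
    rintro rfl
    have := hz.eq_zero
    rw [eval_one_gk, sub_eq_zero] at this
    exact absurd (by exact_mod_cast this : k = 1) (by omega)
  have hlt : ‖z‖ < 1 := hz1.lt_of_ne fun h ↦
    (Complex.one_lt_norm_two_mul_sub_one h hne).ne' (by rw [← hpow, norm_pow, h, one_pow])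
  refine lt_two_thirds_of_two_mul_sub_one_le_pow hk (norm_nonneg z) hlt ?_
  calc 2 * ‖z‖ - 1 = ‖2 * z‖ - ‖(1 : ℂ)‖ := by simp
    _ ≤ ‖2 * z - 1‖ := norm_sub_norm_le _ _
    _ = ‖z‖ ^ (k + 1) := by rw [← hpow, norm_pow]

lemma eq_of_isRoot_gk_of_norm_le_one (hk : 2 ≤ k) {z w : ℂ} (hz : (gk ℂ k).IsRoot z)
    (hw : (gk ℂ k).IsRoot w) (hz1 : ‖z‖ ≤ 1) (hw1 : ‖w‖ ≤ 1) : z = w := by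
  by_contra hne
  set S := ∑ i ∈ Finset.range (k + 1), z ^ i * w ^ (k + 1 - 1 - i) with hS_def
  have hS : S = 2 := by
    refine mul_right_cancel₀ (sub_ne_zero.mpr hne) ?_
    rw [geom_sum₂_mul, pow_succ_eq_of_isRoot_gk hz, pow_succ_eq_of_isRoot_gk hw]
    ring
  have hbound := norm_geom_sum₂_le (norm_lt_two_thirds_of_isRoot_gk hk hz hz1).le
    (norm_lt_two_thirds_of_isRoot_gk hk hw hw1).le (k + 1)
  rw [← hS_def, hS, Complex.norm_ofNat, Nat.add_sub_cancel, Nat.cast_succ] at hbound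
  linarith [add_one_mul_two_thirds_pow_le (k := k) (by omega)]

lemma rootMultiplicity_gk_le_one (hk : 2 ≤ k) {z : ℂ} (hz1 : ‖z‖ ≤ 1) :
    (gk ℂ k).rootMultiplicity z ≤ 1 := by
  by_contra! h
  obtain ⟨hz, hz'⟩ := (one_lt_rootMultiplicity_iff_isRoot (monic_gk (by omega)).ne_zero).mp h
  have hder : (0 : ℂ) = (k + 1) * z ^ k - 2 := by
    simpa [derivative_mul, hz.eq_zero, hz'.eq_zero] using
      congrArg (fun p ↦ (derivative p).eval z) (X_sub_one_mul_gk (R := ℂ) k)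
  have hnorm : (k + 1 : ℝ) * ‖z‖ ^ k = 2 := by
    have := congrArg norm
      (show ((k + 1 : ℕ) : ℂ) * z ^ k = 2 by push_cast; linear_combination -hder)
    rwa [norm_mul, norm_pow, Complex.norm_natCast, Complex.norm_ofNat, Nat.cast_succ] at this
  have hpow := pow_le_pow_left₀ (norm_nonneg z) (norm_lt_two_thirds_of_isRoot_gk hk hz hz1).le k
  nlinarith [add_one_mul_two_thirds_pow_le (k := k) (by omega)]

lemma card_filter_aroots_gk_norm_le_one (hk : 2 ≤ k) :
    (((gk ℤ k).aroots ℂ).filter (‖·‖ ≤ 1)).card ≤ 1 := by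
  classical
  rw [aroots_def, map_gk]
  set t := (gk ℂ k).roots.filter (‖·‖ ≤ 1)
  have hmem : ∀ z ∈ t, (gk ℂ k).IsRoot z ∧ ‖z‖ ≤ 1 := fun z hz ↦ by
    obtain ⟨hz, hz1⟩ := Multiset.mem_filter.mp hz
    exact ⟨(mem_roots (monic_gk (by omega)).ne_zero).mp hz, hz1⟩
  have hnodup : t.Nodup := Multiset.nodup_iff_count_le_one.mpr fun z ↦ by
    rw [Multiset.count_filter, count_roots]
    split_ifs with hz1
    exacts [rootMultiplicity_gk_le_one hk hz1, zero_le_one]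
  rw [← Multiset.toFinset_card_of_nodup hnodup, Finset.card_le_one]
  intro z hz w hw
  rw [Multiset.mem_toFinset] at hz hw
  exact eq_of_isRoot_gk_of_norm_le_one hk (hmem z hz).1 (hmem w hw).1 (hmem z hz).2 (hmem w hw).2

end Complex

theorem gk_irreducible (k : ℕ) (hk : 2 ≤ k) :
    Irreducible (∑ i ∈ Finset.Icc 1 k, (X : ℚ[X]) ^ i - 1) := by
  have hmonic : (gk ℤ k).Monic := monic_gk (by omega)
  have hirr : Irreducible (gk ℤ k) :=
    irreducible_of_card_filter_aroots_norm_le_one hmonic (by rw [natDegree_gk (by omega)]; omega)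
      (by rw [coeff_zero_gk]; exact isUnit_one.neg) (card_filter_aroots_gk_norm_le_one hk)
  rw [IsPrimitive.Int.irreducible_iff_irreducible_map_cast hmonic.isPrimitive, map_gk] at hirr
  exact hirr
end

section
/- For k ≥ 2, the k-step Fibonacci numbers satisfy lim_{n→∞} f_{n+1,k}/f_{n,k} = φ_k, the unique positive real root of x^k − x^{k−1} − ⋯ − x − 1. -/
open Filter Polynomial

open Finset Topology

/-! Dividing by `φ ^ n` turns the recurrence into `u n = ∑ i ∈ Icc 1 k, φ⁻¹ ^ i * u (n - i)`, whose
weights are positive and sum to `1` because `φ` is a root of the characteristic polynomial. So each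
term is a weighted average of the previous `k`: the maximum of `u` over the window `[n, n + k]`
decreases, its minimum increases, and since a term sitting at the window minimum pulls every later
term down by a fixed fraction of the gap, the gap shrinks geometrically. Hence `u` converges, to a
positive limit because `f` is eventually positive, and `f (n + 1) / f n = φ * u (n + 1) / u n → φ`.
-/

theorem sum_mul_le_sub_mul_sub {ι R : Type*} [CommRing R] [PartialOrder R] [IsOrderedRing R]
    {s : Finset ι} {w x : ι → R} {B : R} (hw : ∀ i ∈ s, 0 ≤ w i) (hw₁ : ∑ i ∈ s, w i = 1)
    (hx : ∀ i ∈ s, x i ≤ B) {i₀ : ι} (hi₀ : i₀ ∈ s) :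
    ∑ i ∈ s, w i * x i ≤ B - w i₀ * (B - x i₀) := by
  have hdef : B - ∑ i ∈ s, w i * x i = ∑ i ∈ s, w i * (B - x i) := by
    simp only [mul_sub, sum_sub_distrib, ← sum_mul, hw₁, one_mul]
  rw [le_sub_comm, hdef]
  exact single_le_sum (fun i hi => mul_nonneg (hw i hi) (sub_nonneg.2 (hx i hi))) hi₀

structure IsAveragingRecurrence (k : ℕ) (w u : ℕ → ℝ) : Prop where
  weight_pos : ∀ i ∈ Icc 1 k, 0 < w i
  sum_weight : ∑ i ∈ Icc 1 k, w i = 1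
  eq_sum : ∀ n, k ≤ n → u n = ∑ i ∈ Icc 1 k, w i * u (n - i)

def windowMax (k : ℕ) (u : ℕ → ℝ) (n : ℕ) : ℝ :=
  (Icc n (n + k)).sup' (nonempty_Icc.2 (Nat.le_add_right n k)) u

namespace IsAveragingRecurrence

variable {k : ℕ} {w u : ℕ → ℝ}

theorem one_le (h : IsAveragingRecurrence k w u) : 1 ≤ k := by
  by_contra hk
  simpa [Nat.lt_one_iff.1 (not_le.1 hk)] using h.sum_weight

theorem neg (h : IsAveragingRecurrence k w u) : IsAveragingRecurrence k w (-u) where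
  weight_pos := h.weight_pos
  sum_weight := h.sum_weight
  eq_sum n hn := by simp [h.eq_sum n hn, sum_neg_distrib]

theorem exists_pos_le_weight (h : IsAveragingRecurrence k w u) :
    ∃ δ, 0 < δ ∧ δ ≤ 1 ∧ ∀ i ∈ Icc 1 k, δ ≤ w i := by
  have hne : (Icc 1 k).Nonempty := nonempty_Icc.2 h.one_le
  refine ⟨(Icc 1 k).inf' hne w, (lt_inf'_iff hne).2 h.weight_pos, ?_, fun i hi => inf'_le w hi⟩
  have h1 : 1 ∈ Icc 1 k := mem_Icc.2 ⟨le_rfl, h.one_le⟩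
  calc (Icc 1 k).inf' hne w ≤ w 1 := inf'_le w h1
    _ ≤ ∑ i ∈ Icc 1 k, w i := single_le_sum (fun i hi => (h.weight_pos i hi).le) h1
    _ = 1 := h.sum_weight

theorem le_of_forall_window_le (h : IsAveragingRecurrence k w u) {n : ℕ} {B : ℝ}
    (hB : ∀ j ∈ Icc n (n + k), u j ≤ B) (j : ℕ) (hj : n ≤ j) : u j ≤ B := by
  induction j using Nat.strong_induction_on with
  | _ j ih =>
    by_cases hjk : j ≤ n + k
    · exact hB j (mem_Icc.2 ⟨hj, hjk⟩)
    rw [h.eq_sum j (by omega)]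
    calc ∑ i ∈ Icc 1 k, w i * u (j - i) ≤ ∑ i ∈ Icc 1 k, w i * B := by
          refine sum_le_sum fun i hi => ?_
          have hik := mem_Icc.1 hi
          exact mul_le_mul_of_nonneg_left (ih _ (by omega) (by omega)) (h.weight_pos i hi).le
      _ = B := by rw [← sum_mul, h.sum_weight, one_mul]

theorem le_windowMax (h : IsAveragingRecurrence k w u) {n j : ℕ} (hj : n ≤ j) :
    u j ≤ windowMax k u n :=
  h.le_of_forall_window_le (fun _ hi => le_sup' u hi) j hj

theorem windowMax_antitone (h : IsAveragingRecurrence k w u) : Antitone (windowMax k u) :=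
  antitone_nat_of_succ_le fun n =>
    sup'_le _ _ fun j hj => h.le_windowMax (by have := (mem_Icc.1 hj).1; omega)

theorem le_sub_pow_mul_sub (h : IsAveragingRecurrence k w u) {δ : ℝ} (hδ₀ : 0 ≤ δ) (hδ₁ : δ ≤ 1)
    (hδ : ∀ i ∈ Icc 1 k, δ ≤ w i) {n m : ℕ} {B : ℝ} (hB : ∀ j, n ≤ j → u j ≤ B) (hm : n ≤ m)
    (j : ℕ) (hmj : m < j) (hnj : n + k ≤ j) : u j ≤ B - δ ^ (j - m) * (B - u m) := by
  induction j using Nat.strong_induction_on with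
  | _ j ih =>
    have hD : 0 ≤ B - u m := sub_nonneg.2 (hB m hm)
    have hwin : ∀ i ∈ Icc 1 k, u (j - i) ≤ B :=
      fun i hi => hB _ (by have := (mem_Icc.1 hi).2; omega)
    have hw := fun i hi => (h.weight_pos i hi).le
    rw [h.eq_sum j (by omega)]
    by_cases hjm : j - m ≤ k
    · have hi₀ : j - m ∈ Icc 1 k := mem_Icc.2 ⟨by omega, hjm⟩
      have hle := sum_mul_le_sub_mul_sub hw h.sum_weight hwin hi₀
      rw [show j - (j - m) = m by omega] at hle
      have : δ ^ (j - m) ≤ w (j - m) :=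
        (pow_le_of_le_one hδ₀ hδ₁ (by omega)).trans (hδ _ hi₀)
      nlinarith
    · have h1 : 1 ∈ Icc 1 k := mem_Icc.2 ⟨le_rfl, h.one_le⟩
      have hle := sum_mul_le_sub_mul_sub hw h.sum_weight hwin h1
      obtain ⟨i, rfl⟩ : ∃ i, j = i + 1 := ⟨j - 1, by omega⟩
      have hprev := ih i (by omega) (by have := h.one_le; omega) (by omega)
      have hpow : δ ^ (i + 1 - m) = δ * δ ^ (i - m) := by rw [← pow_succ']; congr 1; omega
      have : 0 ≤ δ ^ (i - m) * (B - u m) := mul_nonneg (pow_nonneg hδ₀ _) hD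
      rw [Nat.add_sub_cancel] at hle
      nlinarith [hδ 1 h1]

-- `-windowMax k (-u) n` is the minimum of `u` on the window `[n, n + k]`.
theorem windowMax_add_le (h : IsAveragingRecurrence k w u) {δ : ℝ} (hδ₀ : 0 ≤ δ) (hδ₁ : δ ≤ 1)
    (hδ : ∀ i ∈ Icc 1 k, δ ≤ w i) (n : ℕ) :
    windowMax k u (n + k + 1) ≤
      windowMax k u n - δ ^ (2 * k + 1) * (windowMax k u n + windowMax k (-u) n) := by
  obtain ⟨m, hm, hmin⟩ := exists_mem_eq_sup' (nonempty_Icc.2 (Nat.le_add_right n k)) (-u)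
  have hm := mem_Icc.1 hm
  rw [show windowMax k (-u) n = -u m from hmin, ← sub_eq_add_neg]
  refine sup'_le _ _ fun j hj => ?_
  have hj := mem_Icc.1 hj
  have hD : 0 ≤ windowMax k u n - u m := sub_nonneg.2 (h.le_windowMax hm.1)
  calc u j ≤ windowMax k u n - δ ^ (j - m) * (windowMax k u n - u m) :=
        h.le_sub_pow_mul_sub hδ₀ hδ₁ hδ (fun _ hj => h.le_windowMax hj) hm.1 j (by omega) (by omega)
    _ ≤ windowMax k u n - δ ^ (2 * k + 1) * (windowMax k u n - u m) :=
        sub_le_sub_left (mul_le_mul_of_nonneg_right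
          (pow_le_pow_of_le_one hδ₀ hδ₁ (show j - m ≤ 2 * k + 1 by omega)) hD) _

theorem exists_tendsto (h : IsAveragingRecurrence k w u) : ∃ L, Tendsto u atTop (𝓝 L) := by
  obtain ⟨δ, hδ₀, hδ₁, hδ⟩ := h.exists_pos_le_weight
  set M := windowMax k u
  set N := windowMax k (-u)
  have hup : ∀ {n j}, n ≤ j → u j ≤ M n := h.le_windowMax
  have hlow : ∀ {n j}, n ≤ j → -N n ≤ u j := fun hj => neg_le.1 (h.neg.le_windowMax hj)
  obtain ⟨a, ha⟩ : ∃ a, Tendsto M atTop (𝓝 a) := ⟨_, tendsto_atTop_ciInf h.windowMax_antitone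
    ⟨-N 0, by rintro _ ⟨n, rfl⟩; exact (hlow (Nat.zero_le n)).trans (hup le_rfl)⟩⟩
  obtain ⟨b, hb⟩ : ∃ b, Tendsto N atTop (𝓝 b) := ⟨_, tendsto_atTop_ciInf h.neg.windowMax_antitone
    ⟨-M 0, by
      rintro _ ⟨n, rfl⟩
      exact (neg_le_neg (hup (Nat.zero_le n))).trans (neg_le.1 (hlow le_rfl))⟩⟩
  have hab : a + b ≤ 0 := by
    have := le_of_tendsto_of_tendsto' (ha.comp (tendsto_add_atTop_nat (k + 1)))
      (ha.sub ((ha.add hb).const_mul (δ ^ (2 * k + 1)))) (h.windowMax_add_le hδ₀.le hδ₁ hδ)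
    nlinarith [pow_pos hδ₀ (2 * k + 1)]
  have hba : -b ≤ a :=
    le_of_tendsto_of_tendsto' hb.neg ha fun _ => (hlow le_rfl).trans (hup le_rfl)
  refine ⟨a, tendsto_of_tendsto_of_tendsto_of_le_of_le ?_ ha (fun _ => hlow le_rfl)
    fun _ => hup le_rfl⟩
  simpa [show -b = a by linarith] using hb.neg

theorem pos_of_tendsto (h : IsAveragingRecurrence k w u) {L : ℝ} (hL : Tendsto u atTop (𝓝 L))
    {n : ℕ} (hpos : ∀ j, n ≤ j → 0 < u j) : 0 < L := by
  have hneg : windowMax k (-u) n < 0 :=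
    (sup'_lt_iff _).2 fun j hj => neg_neg_of_pos (hpos j (mem_Icc.1 hj).1)
  have : -windowMax k (-u) n ≤ L :=
    ge_of_tendsto hL (eventually_atTop.2 ⟨n, fun j hj => neg_le.1 (h.neg.le_windowMax hj)⟩)
  linarith

end IsAveragingRecurrence

theorem sum_Icc_inv_pow_eq_one {φ : ℝ} (hφ : φ ≠ 0) {k : ℕ}
    (hroot : φ ^ k = ∑ i ∈ range k, φ ^ i) : ∑ i ∈ Icc 1 k, φ⁻¹ ^ i = 1 := by
  calc ∑ i ∈ Icc 1 k, φ⁻¹ ^ i = ∑ i ∈ range k, φ⁻¹ ^ (k - 1 - i + 1) := by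
        rw [sum_range_reflect (fun i => φ⁻¹ ^ (i + 1)), ← Ico_add_one_right_eq_Icc,
          sum_Ico_eq_sum_range]
        simp [add_comm]
    _ = φ⁻¹ ^ k * ∑ i ∈ range k, φ ^ i := by
        rw [mul_sum]
        refine sum_congr rfl fun i hi => ?_
        have hik := mem_range.1 hi
        rw [← pow_sub_mul_pow φ⁻¹ hik.le, mul_assoc, inv_pow φ i,
          inv_mul_cancel₀ (pow_ne_zero i hφ), mul_one]
        congr 1; omega
    _ = 1 := by rw [← hroot, inv_pow, inv_mul_cancel₀ (pow_ne_zero k hφ)]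

theorem isAveragingRecurrence_mul_inv_pow {k : ℕ} {f : ℕ → ℝ}
    (hrec : ∀ n, k ≤ n → f n = ∑ i ∈ Icc 1 k, f (n - i)) {φ : ℝ} (hφ : 0 < φ)
    (hroot : φ ^ k = ∑ i ∈ range k, φ ^ i) :
    IsAveragingRecurrence k (fun i => φ⁻¹ ^ i) (fun n => f n * φ⁻¹ ^ n) where
  weight_pos _ _ := by positivity
  sum_weight := sum_Icc_inv_pow_eq_one hφ.ne' hroot
  eq_sum n hn := by
    rw [hrec n hn, sum_mul]
    refine sum_congr rfl fun i hi => ?_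
    rw [show n = i + (n - i) by have := (mem_Icc.1 hi).2; omega, pow_add, Nat.add_sub_cancel_left]
    ring

theorem pos_of_eq_sum_Icc {k : ℕ} (hk : 1 ≤ k) {f : ℕ → ℕ}
    (hrec : ∀ n, k ≤ n → f n = ∑ i ∈ Icc 1 k, f (n - i)) {m : ℕ} (hkm : k ≤ m + 1)
    (hm : 0 < f m) (n : ℕ) (hmn : m ≤ n) : 0 < f n := by
  induction n, hmn using Nat.le_induction with
  | base => exact hm
  | succ n hmn ih =>
    rw [hrec (n + 1) (by omega)]
    exact ih.trans_le (single_le_sum (f := fun i => f (n + 1 - i)) (fun _ _ => Nat.zero_le _)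
      (mem_Icc.2 ⟨le_rfl, hk⟩))

theorem kstep_fib_ratio_tendsto_golden_general (k : ℕ) (f : ℕ → ℕ)
    (h1 : f (k - 1) = 1)
    (hrec : ∀ n, k ≤ n → f n = ∑ i ∈ Finset.Icc 1 k, f (n - i))
    (φ : ℝ) (hφ : 0 < φ)
    (hroot : ((X : ℝ[X]) ^ k - ∑ i ∈ Finset.range k, X ^ i).eval φ = 0) :
    Tendsto (fun n => (f (n + 1) : ℝ) / (f n : ℝ)) atTop (nhds φ) := by
  have hroot' : φ ^ k = ∑ i ∈ range k, φ ^ i := by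
    simpa [eval_finsetSum, sub_eq_zero] using hroot
  have hu := isAveragingRecurrence_mul_inv_pow (f := fun n => (f n : ℝ))
    (fun n hn => by rw [hrec n hn]; push_cast; rfl) hφ hroot'
  obtain ⟨L, hL⟩ := hu.exists_tendsto
  have hfpos := pos_of_eq_sum_Icc hu.one_le hrec (m := k - 1) (by omega) (by simp [h1])
  have hL₀ : 0 < L := hu.pos_of_tendsto hL fun j hj => by
    have := hfpos j hj
    positivity
  have hratio := ((hL.comp (tendsto_add_atTop_nat 1)).div hL hL₀.ne').const_mul φ
  rw [div_self hL₀.ne', mul_one] at hratio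
  refine hratio.congr fun n => ?_
  simp only [Pi.div_apply, Function.comp_apply, pow_succ']
  rw [← mul_assoc, mul_div_mul_right _ _ (pow_ne_zero n (inv_ne_zero hφ.ne')),
    ← mul_div_assoc, mul_left_comm, mul_inv_cancel₀ hφ.ne', mul_one]

theorem kstep_fib_ratio_tendsto_golden (k : ℕ) (hk : 2 ≤ k) (f : ℕ → ℕ)
    (h0 : ∀ n ≤ k - 2, f n = 0)
    (h1 : f (k - 1) = 1)
    (hrec : ∀ n, k ≤ n → f n = ∑ i ∈ Finset.Icc 1 k, f (n - i))
    (φ : ℝ) (hφ : 0 < φ)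
    (hroot : ((X : ℝ[X]) ^ k - ∑ i ∈ Finset.range k, X ^ i).eval φ = 0) :
    Tendsto (fun n => (f (n + 1) : ℝ) / (f n : ℝ)) atTop (nhds φ) :=
  kstep_fib_ratio_tendsto_golden_general k f h1 hrec φ hφ hroot
end

section
/- For k = 2 (words avoiding '11'), the limit as n → ∞ of v_{n,2}/(n·B_n(2)) equals (5−√5)/10 = (1 − 1/√5)/2 ≈ 0.2763932. -/
open Filter

/-- Number of binary words of length `n` with no run of `k` ones. -/
def B (n k : ℕ) : ℕ :=
  (Finset.univ.filter (fun w : Fin n → Bool => AvoidsOnes k (List.ofFn w))).card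

/-- Total number of 1s over all such words. -/
def v (n k : ℕ) : ℕ :=
  ∑ w ∈ Finset.univ.filter (fun w : Fin n → Bool => AvoidsOnes k (List.ofFn w)),
    (List.ofFn w).count true

/- ### Combinatorial part -/

lemma avoids_false_cons (t : List Bool) :
    AvoidsOnes 2 (false :: t) ↔ AvoidsOnes 2 t := by
  unfold AvoidsOnes
  rw [show List.replicate 2 true = [true, true] from rfl, List.infix_cons_iff]
  simp [List.cons_prefix_cons]

lemma avoids_true_cons (t : List Bool) :
    AvoidsOnes 2 (true :: t) ↔ AvoidsOnes 2 t ∧ t.head? ≠ some true := by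
  unfold AvoidsOnes
  rw [show List.replicate 2 true = [true, true] from rfl, List.infix_cons_iff]
  constructor
  · intro h
    refine ⟨fun h' => h (Or.inr h'), fun h' => ?_⟩
    cases t with
    | nil => simp at h'
    | cons a s =>
      simp at h'
      subst h'
      exact h (Or.inl ⟨s, rfl⟩)
  · rintro ⟨h1, h2⟩ (h | h)
    · cases t with
      | nil => exact absurd ((List.cons_prefix_cons.1 h).2) (by decide)
      | cons a s =>
        obtain ⟨-, hp⟩ := List.cons_prefix_cons.1 h
        obtain ⟨ha, -⟩ := List.cons_prefix_cons.1 hp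
        exact h2 (by simp [ha])
    · exact h1 h

/-- Generic sum over avoiding words, to run the recurrences for both `B` and `v`. -/
def S (p : List Bool → Prop) [DecidablePred p] (f : List Bool → ℕ) (n : ℕ) : ℕ :=
  ∑ w ∈ Finset.univ.filter (fun w : Fin n → Bool => p (List.ofFn w)), f (List.ofFn w)

lemma S_succ (p : List Bool → Prop) [DecidablePred p] (f : List Bool → ℕ) (n : ℕ) :
    S p f (n + 1) =
      S (fun t => p (false :: t)) (fun t => f (false :: t)) n +
      S (fun t => p (true :: t)) (fun t => f (true :: t)) n := by
  classical
  unfold S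
  rw [Finset.sum_filter, Finset.sum_filter, Finset.sum_filter]
  rw [← (Fin.consEquiv (fun _ : Fin (n+1) => Bool)).sum_comp
    (fun w : Fin (n+1) → Bool => if p (List.ofFn w) then f (List.ofFn w) else 0)]
  have hcons : ∀ (b : Bool) (w : Fin n → Bool),
      List.ofFn (Fin.cons b w : Fin (n+1) → Bool) = b :: List.ofFn w := by
    intro b w
    rw [List.ofFn_succ]
    simp [Fin.tail]
  rw [Fintype.sum_prod_type, Fintype.sum_bool]
  simp only [Fin.consEquiv, Equiv.coe_fn_mk, hcons]
  rw [add_comm]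

lemma B_eq_S (n : ℕ) : B n 2 = S (AvoidsOnes 2) (fun _ => 1) n := by
  unfold B S
  rw [Finset.card_eq_sum_ones]

lemma v_eq_S (n : ℕ) : v n 2 = S (AvoidsOnes 2) (fun t => t.count true) n := by
  rfl

lemma S_congr (p q : List Bool → Prop) [DecidablePred p] [DecidablePred q]
    (f g : List Bool → ℕ) (n : ℕ) (hpq : ∀ t, p t ↔ q t) (hfg : ∀ t, f t = g t) :
    S p f n = S q g n := by
  unfold S
  rw [Finset.filter_congr (fun w _ => by rw [hpq])]
  exact Finset.sum_congr rfl fun w _ => hfg _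

lemma S_two_step (f : List Bool → ℕ) (n : ℕ) :
    S (AvoidsOnes 2) f (n + 2) =
      S (AvoidsOnes 2) (fun t => f (false :: t)) (n + 1) +
      S (AvoidsOnes 2) (fun t => f (true :: false :: t)) n := by
  classical
  rw [S_succ]
  congr 1
  · exact S_congr _ _ _ _ _ (fun t => avoids_false_cons t) (fun t => rfl)
  · rw [S_succ]
    have h1 : S (fun t => AvoidsOnes 2 (true :: true :: t))
        (fun t => f (true :: true :: t)) n = 0 := by
      unfold S
      rw [Finset.filter_false_of_mem, Finset.sum_empty]
      intro w _
      intro h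
      exact (avoids_true_cons _).1 h |>.2 rfl
    rw [h1, add_zero]
    exact S_congr _ _ _ _ _
      (fun t => by
        rw [avoids_true_cons, avoids_false_cons]
        simp)
      (fun t => rfl)

lemma B_rec (n : ℕ) : B (n + 2) 2 = B (n + 1) 2 + B n 2 := by
  rw [B_eq_S, B_eq_S, B_eq_S]
  exact S_two_step (fun _ => 1) n

lemma v_rec (n : ℕ) : v (n + 2) 2 = v (n + 1) 2 + (v n 2 + B n 2) := by
  rw [v_eq_S, v_eq_S, v_eq_S, B_eq_S]
  rw [S_two_step (fun t => t.count true) n]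
  have h1 : S (AvoidsOnes 2) (fun t => List.count true (false :: t)) (n + 1) =
      S (AvoidsOnes 2) (fun t => List.count true t) (n + 1) :=
    S_congr _ _ _ _ _ (fun t => Iff.rfl) (fun t => by simp)
  have h2 : S (AvoidsOnes 2) (fun t => List.count true (true :: false :: t)) n =
      S (AvoidsOnes 2) (fun t => List.count true t) n +
      S (AvoidsOnes 2) (fun _ => 1) n := by
    unfold S
    rw [← Finset.sum_add_distrib]
    exact Finset.sum_congr rfl fun w _ => by simp
  rw [h1, h2]

lemma B_zero : B 0 2 = 1 := by decide
lemma B_one : B 1 2 = 2 := by decide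
lemma v_zero : v 0 2 = 0 := by decide
lemma v_one : v 1 2 = 1 := by decide

lemma B_fib (n : ℕ) : B n 2 = Nat.fib (n + 2) := by
  induction n using Nat.twoStepInduction with
  | zero => simp [B_zero]
  | one => rw [B_one]; decide
  | more n ih1 ih2 =>
    rw [B_rec, ih1, ih2, Nat.fib_add_two (n := n + 2)]
    simp only [show n + 1 + 2 = n + 2 + 1 from rfl]
    exact Nat.add_comm _ _

lemma v_closed (n : ℕ) :
    5 * v n 2 + Nat.fib (n + 1) = (n + 1) * (Nat.fib n + Nat.fib (n + 2)) := by
  induction n using Nat.twoStepInduction with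
  | zero => simp [v_zero]
  | one => rw [v_one]; decide
  | more n ih1 ih2 =>
    rw [v_rec, B_fib]
    simp only [show n + 2 + 1 = n + 3 from rfl, show n + 1 + 2 = n + 3 from rfl,
      show n + 2 + 2 = n + 4 from rfl, show n + 1 + 1 = n + 2 from rfl] at ih1 ih2 ⊢
    have h2 : Nat.fib (n + 2) = Nat.fib n + Nat.fib (n + 1) := Nat.fib_add_two
    have h3 : Nat.fib (n + 3) = Nat.fib (n + 1) + Nat.fib (n + 2) := by
      have := Nat.fib_add_two (n := n + 1)
      simpa [show n + 1 + 2 = n + 3 from rfl, show n + 1 + 1 = n + 2 from rfl] using this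
    have h4 : Nat.fib (n + 4) = Nat.fib (n + 2) + Nat.fib (n + 3) := by
      have := Nat.fib_add_two (n := n + 2)
      simpa [show n + 2 + 2 = n + 4 from rfl, show n + 2 + 1 = n + 3 from rfl] using this
    zify at ih1 ih2 h2 h3 h4 ⊢
    push_cast at ih1 ih2 h2 h3 h4 ⊢
    linear_combination ih1 + ih2 - ((n : ℤ) + 1) * h2 - ((n : ℤ) + 3) * h4

/- ### Analytic part -/

open goldenRatio Real

lemma fib_pos_real (n : ℕ) : (0 : ℝ) < Nat.fib (n + 2) := by
  exact_mod_cast Nat.fib_pos.2 (Nat.succ_pos _)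

lemma abs_goldConj_lt_one : |ψ| < 1 := by
  rw [abs_lt]
  constructor
  · exact neg_one_lt_goldenConj
  · linarith [goldenConj_neg]

lemma ratio_tendsto :
    Tendsto (fun n : ℕ => (Nat.fib n : ℝ) / (Nat.fib (n + 2) : ℝ)) atTop
      (nhds ((φ ^ 2)⁻¹)) := by
  have hq : |ψ / φ| < 1 := by
    rw [abs_div, abs_of_pos goldenRatio_pos]
    calc |ψ| / φ ≤ |ψ| / 1 := by
          apply div_le_div_of_nonneg_left (abs_nonneg _) one_pos (le_of_lt one_lt_goldenRatio)
      _ = |ψ| := div_one _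
      _ < 1 := abs_goldConj_lt_one
  have hpow : Tendsto (fun n : ℕ => (ψ / φ) ^ n) atTop (nhds 0) :=
    tendsto_pow_atTop_nhds_zero_of_abs_lt_one hq
  have heq : ∀ n : ℕ, (Nat.fib n : ℝ) / (Nat.fib (n + 2) : ℝ) =
      (1 - (ψ / φ) ^ n) / (φ ^ 2 - ψ ^ 2 * (ψ / φ) ^ n) := by
    intro n
    have h5 : (0:ℝ) < √5 := by positivity
    have hφn : (φ : ℝ) ^ n ≠ 0 := pow_ne_zero _ goldenRatio_ne_zero
    have hd : φ ^ (n + 2) - ψ ^ (n + 2) = √5 * (Nat.fib (n + 2) : ℝ) := by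
      rw [Real.coe_fib_eq, mul_comm, div_mul_cancel₀ _ (ne_of_gt h5)]
    have hdpos : (0:ℝ) < φ ^ (n + 2) - ψ ^ (n + 2) := by
      rw [hd]; exact mul_pos h5 (fib_pos_real n)
    have key : φ ^ 2 - ψ ^ 2 * (ψ / φ) ^ n = (φ ^ (n + 2) - ψ ^ (n + 2)) / φ ^ n := by
      have gen : ∀ a b : ℝ, a ≠ 0 →
          a ^ 2 - b ^ 2 * (b / a) ^ n = (a ^ (n + 2) - b ^ (n + 2)) / a ^ n := by
        intro a b ha
        rw [div_pow]
        field_simp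
        ring
      exact gen _ _ goldenRatio_ne_zero
    have keyne : φ ^ 2 - ψ ^ 2 * (ψ / φ) ^ n ≠ 0 := by
      rw [key]; exact div_ne_zero (ne_of_gt hdpos) hφn
    rw [div_eq_div_iff (ne_of_gt (fib_pos_real n)) keyne, key,
      Real.coe_fib_eq, Real.coe_fib_eq]
    have gen2 : ∀ a b c : ℝ, a ≠ 0 → c ≠ 0 →
        (a ^ n - b ^ n) / c * ((a ^ (n + 2) - b ^ (n + 2)) / a ^ n) =
          (1 - (b / a) ^ n) * ((a ^ (n + 2) - b ^ (n + 2)) / c) := by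
      intro a b c ha hc
      rw [div_pow]
      field_simp
    exact gen2 _ _ _ goldenRatio_ne_zero (ne_of_gt h5)
  rw [show ((φ:ℝ) ^ 2)⁻¹ = (1 - 0) / (φ ^ 2 - ψ ^ 2 * 0) by
    rw [mul_zero, sub_zero, sub_zero, one_div]]
  refine Tendsto.congr (fun n => (heq n).symm) ?_
  apply Tendsto.div
  · exact tendsto_const_nhds.sub hpow
  · exact tendsto_const_nhds.sub (tendsto_const_nhds.mul hpow)
  · have h : (0:ℝ) < φ ^ 2 := by positivity
    rw [mul_zero, sub_zero]
    exact ne_of_gt h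

lemma small_tendsto :
    Tendsto (fun n : ℕ => (Nat.fib (n + 1) : ℝ) / (n * Nat.fib (n + 2))) atTop
      (nhds 0) := by
  apply squeeze_zero (fun n => by positivity)
    (g := fun n : ℕ => 1 / (n : ℝ))
  · intro n
    rcases Nat.eq_zero_or_pos n with h | h
    · subst h; simp
    · have hn : (0:ℝ) < n := by exact_mod_cast h
      rw [div_le_div_iff₀ (mul_pos hn (fib_pos_real n)) hn]
      have hle : (Nat.fib (n + 1) : ℝ) ≤ Nat.fib (n + 2) := by
        exact_mod_cast Nat.fib_le_fib_succ
      calc (Nat.fib (n + 1) : ℝ) * n ≤ (Nat.fib (n + 2) : ℝ) * n := by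
            apply mul_le_mul_of_nonneg_right hle (le_of_lt hn)
        _ = 1 * (n * Nat.fib (n + 2)) := by ring
  · exact tendsto_one_div_atTop_nhds_zero_nat

lemma limit_value : ((1 * ((φ ^ 2)⁻¹ + 1) - 0) / 5 : ℝ) = (5 - √5) / 10 := by
  have h5 : √5 * √5 = 5 := Real.mul_self_sqrt (by norm_num)
  have h5pos : (0:ℝ) < √5 := by positivity
  have hsq : (φ:ℝ) ^ 2 = φ + 1 := goldenRatio_sq
  rw [hsq]
  have hφ : (φ:ℝ) = (1 + √5) / 2 := rfl
  rw [hφ]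
  have hne : (1 + √5) / 2 + 1 ≠ 0 := by positivity
  field_simp
  nlinarith [h5]

theorem expected_bit_limit_k2 :
    Tendsto (fun n : ℕ => (v n 2 : ℝ) / (n * B n 2)) atTop
      (nhds ((5 - Real.sqrt 5) / 10)) := by
  have key : ∀ n : ℕ, 1 ≤ n → (v n 2 : ℝ) / (n * B n 2) =
      ((1 + 1 / n) * ((Nat.fib n : ℝ) / (Nat.fib (n + 2) : ℝ) + 1) -
        (Nat.fib (n + 1) : ℝ) / (n * Nat.fib (n + 2))) / 5 := by
    intro n hn
    have hnR : (0:ℝ) < n := by exact_mod_cast hn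
    have hf := fib_pos_real n
    have hv : (5:ℝ) * v n 2 = ((n:ℝ) + 1) * ((Nat.fib n : ℝ) + Nat.fib (n + 2)) -
        Nat.fib (n + 1) := by
      have h : ((5 * v n 2 + Nat.fib (n + 1) : ℕ) : ℝ) =
          (((n + 1) * (Nat.fib n + Nat.fib (n + 2)) : ℕ) : ℝ) := by
        exact_mod_cast v_closed n
      push_cast at h
      linarith
    rw [B_fib]
    calc (v n 2 : ℝ) / (n * Nat.fib (n + 2))
        = (5 * v n 2) / (5 * (n * Nat.fib (n + 2))) := by
          rw [mul_div_mul_left _ _ (by norm_num : (5:ℝ) ≠ 0)]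
      _ = (((n:ℝ) + 1) * ((Nat.fib n : ℝ) + Nat.fib (n + 2)) - Nat.fib (n + 1)) /
            (5 * (n * Nat.fib (n + 2))) := by rw [hv]
      _ = ((1 + 1 / n) * ((Nat.fib n : ℝ) / (Nat.fib (n + 2) : ℝ) + 1) -
            (Nat.fib (n + 1) : ℝ) / (n * Nat.fib (n + 2))) / 5 := by
          rw [div_eq_div_iff
            (mul_ne_zero (by norm_num) (mul_ne_zero (ne_of_gt hnR) (ne_of_gt hf)))
            (by norm_num : (5:ℝ) ≠ 0)]
          field_simp
  rw [← limit_value]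
  have hT : Tendsto (fun n : ℕ =>
      ((1 + 1 / n) * ((Nat.fib n : ℝ) / (Nat.fib (n + 2) : ℝ) + 1) -
        (Nat.fib (n + 1) : ℝ) / (n * Nat.fib (n + 2))) / 5) atTop
      (nhds ((1 * ((φ ^ 2)⁻¹ + 1) - 0) / 5)) := by
    apply Tendsto.div_const
    apply Tendsto.sub _ small_tendsto
    apply Tendsto.mul
    · have h : Tendsto (fun n : ℕ => 1 / (n : ℝ)) atTop (nhds 0) :=
        tendsto_one_div_atTop_nhds_zero_nat
      simpa using tendsto_const_nhds.add h
    · exact ratio_tendsto.add tendsto_const_nhds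
  refine Tendsto.congr' ?_ hT
  filter_upwards [eventually_ge_atTop 1] with n hn
  exact (key n hn).symm
end

section
/- The double limit lim_{k→∞} lim_{n→∞} v_{n,k}/(n·|B_n(1^k)|) equals 1/2, where the inner limit is given by the rational expression (k x^k − k x^{k−1} − x^k + 1)/(k x^k − k x^{k−1} + x^{2k} − 3 x^k + 2) at x = 1/φ_k. -/
/-!
Writing `p = φ_k`, the root equation `p ^ k = ∑ i < k, p ^ i` sums to `p ^ k * (2 - p) = 1`,
so `p ^ 2 * (2 - p) ≤ 1`, which forces `p` to be at least the golden ratio `φ_2`. Hence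
`x = 1 / φ_k` stays below `φ_2⁻¹ < 1`, so `k * x ^ k`, `k * x ^ (k - 1)`, `x ^ k` and `x ^ (2 * k)`
all tend to `0`: the numerator tends to `1` and the denominator to `2`.
-/

open Filter Polynomial Topology

lemma one_lt_of_pow_eq_geom_sum {p : ℝ} {k : ℕ} (hk : 2 ≤ k) (hp : 0 ≤ p)
    (hroot : p ^ k = ∑ i ∈ Finset.range k, p ^ i) : 1 < p := by
  by_contra! hp1
  have hsub : {0, 1} ⊆ Finset.range k := by
    intro i hi
    simp only [Finset.mem_insert, Finset.mem_singleton, Finset.mem_range] at hi ⊢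
    omega
  have hsum : 1 + p ≤ p ^ k := by
    simpa [hroot] using
      Finset.sum_le_sum_of_subset_of_nonneg hsub fun i _ _ => pow_nonneg hp i
  linarith [pow_le_of_le_one hp hp1 (by omega : k ≠ 0)]

lemma goldenRatio_le_of_pow_eq_geom_sum {p : ℝ} {k : ℕ} (hk : 2 ≤ k) (hp : 0 ≤ p)
    (hroot : p ^ k = ∑ i ∈ Finset.range k, p ^ i) : Real.goldenRatio ≤ p := by
  have hp1 := one_lt_of_pow_eq_geom_sum hk hp hroot
  have hkey : p ^ k * (2 - p) = 1 := by
    rw [geom_sum_eq hp1.ne', eq_div_iff (sub_ne_zero.2 hp1.ne')] at hroot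
    linarith
  have hp2 : p < 2 := by
    by_contra! h
    nlinarith [pow_pos (zero_lt_one.trans hp1) k]
  have hcubic : p ^ 2 * (2 - p) ≤ 1 :=
    hkey ▸ mul_le_mul_of_nonneg_right (pow_le_pow_right₀ hp1.le hk) (by linarith)
  -- `1 - p ^ 2 * (2 - p) = (p - 1) * (p ^ 2 - p - 1)`, and `φ` is the positive root of the last factor
  have hquad : 0 ≤ p ^ 2 - p - 1 := by nlinarith
  nlinarith [Real.goldenRatio_sq, Real.goldenRatio_pos]

section BoundedBase

variable {a : ℕ → ℝ} {r : ℝ}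

lemma tendsto_natCast_mul_pow_sub (hr0 : 0 < r) (hr1 : r < 1) (m : ℕ) :
    Tendsto (fun k : ℕ => (k : ℝ) * r ^ (k - m)) atTop (𝓝 0) := by
  have h := (tendsto_self_mul_const_pow_of_lt_one hr0.le hr1).const_mul (r ^ m)⁻¹
  rw [mul_zero] at h
  refine h.congr' ?_
  filter_upwards [eventually_ge_atTop m] with k hk
  rw [← Nat.sub_add_cancel hk, pow_add, Nat.add_sub_cancel]
  field_simp

lemma tendsto_natCast_mul_pow_sub_of_le (hr0 : 0 < r) (hr1 : r < 1)
    (ha : ∀ᶠ k in atTop, 0 ≤ a k ∧ a k ≤ r) (m : ℕ) :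
    Tendsto (fun k : ℕ => (k : ℝ) * a k ^ (k - m)) atTop (𝓝 0) := by
  refine squeeze_zero' ?_ ?_ (tendsto_natCast_mul_pow_sub hr0 hr1 m)
  · filter_upwards [ha] with k hk
    exact mul_nonneg k.cast_nonneg (pow_nonneg hk.1 _)
  · filter_upwards [ha] with k hk
    exact mul_le_mul_of_nonneg_left (pow_le_pow_left₀ hk.1 hk.2 _) k.cast_nonneg

lemma tendsto_pow_self_of_le (hr1 : r < 1) (ha : ∀ᶠ k in atTop, 0 ≤ a k ∧ a k ≤ r) :
    Tendsto (fun k : ℕ => a k ^ k) atTop (𝓝 0) := by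
  obtain ⟨k, hk⟩ := ha.exists
  refine squeeze_zero' ?_ ?_
    (tendsto_pow_atTop_nhds_zero_of_lt_one (hk.1.trans hk.2) hr1)
  · filter_upwards [ha] with k hk
    exact pow_nonneg hk.1 _
  · filter_upwards [ha] with k hk
    exact pow_le_pow_left₀ hk.1 hk.2 _

end BoundedBase

theorem expected_bit_double_limit (φ : ℕ → ℝ)
    (hφ : ∀ k, 2 ≤ k → 0 < φ k ∧
      ((X : ℝ[X]) ^ k - ∑ i ∈ Finset.range k, X ^ i).eval (φ k) = 0) :
    Tendsto (fun k : ℕ =>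
        ((k : ℝ) * (1 / φ k) ^ k - k * (1 / φ k) ^ (k - 1) - (1 / φ k) ^ k + 1) /
        ((k : ℝ) * (1 / φ k) ^ k - k * (1 / φ k) ^ (k - 1) + (1 / φ k) ^ (2 * k)
          - 3 * (1 / φ k) ^ k + 2))
      atTop (nhds (1 / 2)) := by
  set x : ℕ → ℝ := fun k => 1 / φ k
  have hr0 : 0 < Real.goldenRatio⁻¹ := inv_pos.2 Real.goldenRatio_pos
  have hr1 : Real.goldenRatio⁻¹ < 1 := inv_lt_one_of_one_lt₀ Real.one_lt_goldenRatio
  have hx : ∀ᶠ k in atTop, 0 ≤ x k ∧ x k ≤ Real.goldenRatio⁻¹ := by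
    filter_upwards [eventually_ge_atTop 2] with k hk
    obtain ⟨hpos, hroot⟩ := hφ k hk
    simp only [eval_sub, eval_pow, eval_X, eval_finsetSum, sub_eq_zero] at hroot
    have hgold := goldenRatio_le_of_pow_eq_geom_sum hk hpos.le hroot
    exact ⟨by positivity, (one_div (φ k)).trans_le (inv_anti₀ Real.goldenRatio_pos hgold)⟩
  have hkx := tendsto_natCast_mul_pow_sub_of_le hr0 hr1 hx 0
  have hkx' := tendsto_natCast_mul_pow_sub_of_le hr0 hr1 hx 1
  have hxk := tendsto_pow_self_of_le hr1 hx
  have hx2k : Tendsto (fun k => x k ^ (2 * k)) atTop (𝓝 0) := by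
    simpa only [pow_mul', zero_pow two_ne_zero] using hxk.pow 2
  have hnum := ((hkx.sub hkx').sub hxk).add_const 1
  have hden := ((((hkx.sub hkx').add hx2k).sub (hxk.const_mul 3))).add_const 2
  simp only [Nat.sub_zero, sub_zero, add_zero, mul_zero, zero_add] at hnum hden
  exact hnum.div hden two_ne_zero
end

section
/- For k ≥ 2, the formal power series identity F_k(x,y)·(y − xy² − xy + (xy)^{k+1}) = y(1 − (xy)^k) holds, where F_k(x,y) = Σ_{n,m} a_{n,m} x^n y^m and a_{n,m} counts binary words of length n avoiding k consecutive 1s with exactly m ones. -/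
/-- `a k n m`: number of binary words of length `n` avoiding `k` consecutive
ones and containing exactly `m` ones. -/
def a (k n m : ℕ) : ℕ :=
  (Finset.univ.filter (fun w : Fin n → Bool =>
    AvoidsOnes k (List.ofFn w) ∧ (List.ofFn w).count true = m)).card

/-- The bivariate generating function `F_k(x,y) = ∑ a_{n,m} x^n y^m` as a
multivariate formal power series, where `x` is variable `0` and `y` is
variable `1`. -/
def F (k : ℕ) : MvPowerSeries (Fin 2) ℚ :=
  fun e => (a k (e 0) (e 1) : ℚ)


open MvPowerSeries Finset

section

variable {k : ℕ} {u : List Bool}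

theorem avoidsOnes_zero (w : List Bool) : ¬ AvoidsOnes 0 w :=
  fun h => h List.nil_infix

theorem avoidsOnes_succ_nil (k : ℕ) : AvoidsOnes (k + 1) [] := by
  simp [AvoidsOnes]

theorem avoidsOnes_cons_false : AvoidsOnes k (false :: u) ↔ AvoidsOnes k u := by
  cases k with
  | zero => simp [avoidsOnes_zero]
  | succ k => simp [AvoidsOnes, List.infix_cons_iff, List.replicate_succ]

theorem avoidsOnes_succ_cons_true :
    AvoidsOnes (k + 1) (true :: u) ↔ AvoidsOnes (k + 1) u ∧ ¬ List.replicate k true <+: u := by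
  simp only [AvoidsOnes, List.infix_cons_iff, List.replicate_succ, List.cons_prefix_cons,
    true_and]
  tauto

theorem avoidsOnes_succ_replicate_append {j : ℕ} (hj : j ≤ k) (hu : ¬ [true] <+: u) :
    AvoidsOnes (k + 1) (List.replicate j true ++ u) ↔ AvoidsOnes (k + 1) u := by
  induction j with
  | zero => rfl
  | succ j ih =>
    obtain ⟨i, rfl⟩ : ∃ i, k = j + (i + 1) := ⟨k - j - 1, by omega⟩
    have hpre : ¬ List.replicate (j + (i + 1)) true <+: List.replicate j true ++ u := by
      rw [List.replicate_add, List.prefix_append_right_inj]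
      exact fun h => hu (List.IsPrefix.trans ⟨List.replicate i true, rfl⟩ h)
    rw [List.replicate_succ, List.cons_append, avoidsOnes_succ_cons_true, ih (by omega)]
    exact and_iff_left hpre

end

noncomputable section

def wordWeight (w : List Bool) : Fin 2 →₀ ℕ :=
  Finsupp.single 0 w.length + Finsupp.single 1 (w.count true)

theorem wordWeight_append (u v : List Bool) :
    wordWeight (u ++ v) = wordWeight u + wordWeight v := by
  simp only [wordWeight, List.length_append, List.count_append, Finsupp.single_add]
  abel

theorem wordWeight_eq_zero {w : List Bool} : wordWeight w = 0 ↔ w = [] := by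
  refine ⟨fun h => List.eq_nil_of_length_eq_zero ?_, fun h => by simp [h, wordWeight]⟩
  simpa [wordWeight] using congrArg (· 0) h

theorem wordWeight_eq_iff {w : List Bool} {e : Fin 2 →₀ ℕ} :
    wordWeight w = e ↔ w.length = e 0 ∧ w.count true = e 1 := by
  simp [wordWeight, Finsupp.ext_iff, Fin.forall_fin_two, eq_comm]

def wordsOfWeight (e : Fin 2 →₀ ℕ) : Finset (List Bool) :=
  {w ∈ univ.image (List.ofFn : (Fin (e 0) → Bool) → List Bool) | wordWeight w = e}

theorem mem_wordsOfWeight {e : Fin 2 →₀ ℕ} {w : List Bool} :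
    w ∈ wordsOfWeight e ↔ wordWeight w = e := by
  refine ⟨fun h => (mem_filter.mp h).2, fun h => mem_filter.mpr ⟨?_, h⟩⟩
  have hlen := (wordWeight_eq_iff.mp h).1
  exact mem_image.mpr ⟨fun i => w[i.val], mem_univ _, List.ext_get (by simp [hlen]) (by simp)⟩

open Classical in
def wordGF (p : List Bool → Prop) : MvPowerSeries (Fin 2) ℚ :=
  fun e => #{w ∈ wordsOfWeight e | p w}

variable (p q : List Bool → Prop)

theorem coeff_wordGF [DecidablePred p] (e : Fin 2 →₀ ℕ) :
    coeff e (wordGF p) = #{w ∈ wordsOfWeight e | p w} := by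
  rw [coeff_apply]
  unfold wordGF
  congr

theorem wordGF_congr {p q : List Bool → Prop} (h : ∀ w, p w ↔ q w) : wordGF p = wordGF q :=
  congrArg wordGF (funext fun w => propext (h w))

theorem wordGF_eq_add :
    wordGF p = wordGF (fun w => p w ∧ q w) + wordGF (fun w => p w ∧ ¬ q w) := by
  classical
  ext e
  rw [map_add, coeff_wordGF, coeff_wordGF, coeff_wordGF, ← Nat.cast_add, ← filter_filter,
    ← filter_filter, card_filter_add_card_filter_not]

theorem wordGF_or (h : ∀ w, p w → ¬ q w) :
    wordGF (fun w => p w ∨ q w) = wordGF p + wordGF q := by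
  rw [wordGF_eq_add _ p]
  congr 1 <;> apply wordGF_congr <;> grind

theorem wordGF_eq_nil : wordGF (· = []) = 1 := by
  classical
  ext e
  rw [coeff_wordGF, coeff_one]
  split_ifs with he
  · have : {w ∈ wordsOfWeight e | w = []} = {[]} := by
      ext w
      simp [mem_wordsOfWeight, he, wordWeight_eq_zero]
    rw [this, card_singleton, Nat.cast_one]
  · simp only [Nat.cast_eq_zero, card_eq_zero, filter_eq_empty_iff, mem_wordsOfWeight]
    rintro w hw rfl
    exact he (hw ▸ wordWeight_eq_zero.mpr rfl)

theorem monomial_wordWeight (s : List Bool) :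
    monomial (wordWeight s) (1 : ℚ) = X 0 ^ s.length * X 1 ^ s.count true := by
  rw [X_pow_eq, X_pow_eq, monomial_mul_monomial, one_mul, wordWeight]

theorem wordGF_of_forall_eq_append (s : List Bool) (h : ∀ w, q w ↔ ∃ u, p u ∧ w = s ++ u) :
    wordGF q = X 0 ^ s.length * X 1 ^ s.count true * wordGF p := by
  classical
  ext e
  rw [← monomial_wordWeight, coeff_monomial_mul, one_mul, coeff_wordGF]
  split_ifs with hs
  · rw [coeff_wordGF, ← card_image_of_injective {u ∈ wordsOfWeight (e - wordWeight s) | p u}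
      (List.append_right_injective s)]
    congr 2
    ext w
    simp only [mem_filter, mem_image, mem_wordsOfWeight, h]
    constructor
    · rintro ⟨hw, u, hu, rfl⟩
      exact ⟨u, ⟨by rw [← hw, wordWeight_append, add_tsub_cancel_left], hu⟩, rfl⟩
    · rintro ⟨u, ⟨hw, hu⟩, rfl⟩
      exact ⟨by rw [wordWeight_append, hw, add_tsub_cancel_of_le hs], u, hu, rfl⟩
  · simp only [Nat.cast_eq_zero, card_eq_zero, filter_eq_empty_iff, mem_wordsOfWeight, h]
    rintro _ hw ⟨u, -, rfl⟩
    exact hs (hw ▸ wordWeight_append s u ▸ le_self_add)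

end

theorem F_eq_wordGF (k : ℕ) : F k = wordGF (AvoidsOnes k) := by
  ext e
  rw [coeff_apply, F, a, coeff_wordGF (AvoidsOnes k), wordsOfWeight, filter_filter, filter_image,
    card_image_of_injective _ List.ofFn_injective]
  congr 2
  refine filter_congr fun w _ => ?_
  rw [wordWeight_eq_iff, List.length_ofFn]
  tauto

theorem F_zero : F 0 = 0 := by
  ext e
  simp [F_eq_wordGF, coeff_wordGF, avoidsOnes_zero]

section

variable (k : ℕ)

theorem wordGF_avoidsOnes_not_prefix_true :
    wordGF (fun w => AvoidsOnes (k + 1) w ∧ ¬ [true] <+: w) =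
      1 + X 0 * wordGF (AvoidsOnes (k + 1)) := by
  calc wordGF (fun w => AvoidsOnes (k + 1) w ∧ ¬ [true] <+: w)
      = wordGF (fun w => w = [] ∨ ∃ u, AvoidsOnes (k + 1) u ∧ w = [false] ++ u) := by
        refine wordGF_congr fun w => ?_
        rcases w with _ | ⟨_ | _, u⟩ <;> simp [avoidsOnes_succ_nil, avoidsOnes_cons_false]
    _ = wordGF (· = []) + wordGF (fun w => ∃ u, AvoidsOnes (k + 1) u ∧ w = [false] ++ u) :=
        wordGF_or _ _ (by rintro _ rfl ⟨u, -, h⟩; simp at h)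
    _ = 1 + X 0 * wordGF (AvoidsOnes (k + 1)) := by
        rw [wordGF_eq_nil, wordGF_of_forall_eq_append _ _ [false] fun _ => Iff.rfl]
        simp

theorem wordGF_avoidsOnes_prefix_true :
    wordGF (fun w => AvoidsOnes (k + 1) w ∧ [true] <+: w) =
      X 0 * X 1 * wordGF (fun w => AvoidsOnes (k + 1) w ∧ ¬ List.replicate k true <+: w) := by
  rw [wordGF_of_forall_eq_append (fun w => AvoidsOnes (k + 1) w ∧ ¬ List.replicate k true <+: w)
    _ [true]]
  · simp
  rintro (_ | ⟨_ | _, u⟩) <;> simp [avoidsOnes_succ_cons_true]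

theorem wordGF_avoidsOnes_prefix_replicate :
    wordGF (fun w => AvoidsOnes (k + 1) w ∧ List.replicate k true <+: w) =
      X 0 ^ k * X 1 ^ k * wordGF (fun w => AvoidsOnes (k + 1) w ∧ ¬ [true] <+: w) := by
  rw [wordGF_of_forall_eq_append (fun w => AvoidsOnes (k + 1) w ∧ ¬ [true] <+: w)
    _ (List.replicate k true)]
  · simp
  intro w
  constructor
  · rintro ⟨hA, u, rfl⟩
    have hu : ¬ [true] <+: u := fun h =>
      hA ((List.replicate_succ' ▸ (List.prefix_append_right_inj _).mpr h).isInfix)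
    exact ⟨u, ⟨(avoidsOnes_succ_replicate_append le_rfl hu).mp hA, hu⟩, rfl⟩
  · rintro ⟨u, ⟨hA, hu⟩, rfl⟩
    exact ⟨(avoidsOnes_succ_replicate_append le_rfl hu).mpr hA, List.prefix_append _ _⟩

end

theorem generating_function_identity_general (k : ℕ) :
    F k * (MvPowerSeries.X 1 - MvPowerSeries.X 0 * MvPowerSeries.X 1 ^ 2
        - MvPowerSeries.X 0 * MvPowerSeries.X 1
        + (MvPowerSeries.X 0 * MvPowerSeries.X 1) ^ (k + 1)) =
      MvPowerSeries.X 1 *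
        (1 - (MvPowerSeries.X (0 : Fin 2) * MvPowerSeries.X 1) ^ k) := by
  cases k with
  | zero => simp [F_zero]
  | succ k =>
    have hTrue := wordGF_eq_add (AvoidsOnes (k + 1)) ([true] <+: ·)
    have hRun := wordGF_eq_add (AvoidsOnes (k + 1)) (List.replicate k true <+: ·)
    rw [wordGF_avoidsOnes_prefix_true, wordGF_avoidsOnes_not_prefix_true] at hTrue
    rw [wordGF_avoidsOnes_prefix_replicate, wordGF_avoidsOnes_not_prefix_true] at hRun
    -- `hTrue : F = E + x y G` and `hRun : F = (x y) ^ k E + G`, where `E = 1 + x F` and `G`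
    -- counts the words not starting with `k` ones
    rw [F_eq_wordGF]
    linear_combination X 1 * hTrue - X 0 * X 1 ^ 2 * hRun

theorem generating_function_identity (k : ℕ) (hk : 2 ≤ k) :
    F k * (MvPowerSeries.X 1 - MvPowerSeries.X 0 * MvPowerSeries.X 1 ^ 2
        - MvPowerSeries.X 0 * MvPowerSeries.X 1
        + (MvPowerSeries.X 0 * MvPowerSeries.X 1) ^ (k + 1)) =
      MvPowerSeries.X 1 *
        (1 - (MvPowerSeries.X (0 : Fin 2) * MvPowerSeries.X 1) ^ k) :=
  generating_function_identity_general k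
end
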